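/- Let a, b ∈ ℝ, k ≥ 2, and let μ_1, …, μ_k > 0 with M = Σ_i μ_i. Let p_1, …, p_k ∈ ℝ², p_i = (x_i, y_i), be pairwise distinct and satisfy the anisotropic central configuration equations: for every i, a x_i = Σ_{j≠i} μ_j (x_i − x_j)/r_{ij}³ and b y_i = Σ_{j≠i} μ_j (y_i − y_j)/r_{ij}³, where r_{ij} = |p_i − p_j|. If a > 0, then max_i |x_i| ≤ (k − 1)(M/a)^{1/3}, and if additionally k ≥ 4, then max_i |x_i| ≤ (2^{1/3} + 2^{−2/3})(k − 2)^{2/3}(M/a)^{1/3}. Analogously, if b > 0, then max_i |y_i| ≤ (k − 1)(M/b)^{1/3}, and if additionally k ≥ 4, then max_i |y_i| ≤ (2^{1/3} + 2^{−2/3})(k − 2)^{2/3}(M/b)^{1/3}. -/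
import Mathlib


open Finset

abbrev E2 : Type := EuclideanSpace ℝ (Fin 2)

/-- The anisotropic central configuration equations for points `p_i = (x_i, y_i)`:
`a x_i = Σ_{j≠i} μ_j (x_i − x_j)/r_{ij}³` and `b y_i = Σ_{j≠i} μ_j (y_i − y_j)/r_{ij}³`. -/
def AnisoCC {k : ℕ} (a b : ℝ) (μ : Fin k → ℝ) (p : Fin k → E2) : Prop :=
  ∀ i, (a * p i 0 = ∑ j ∈ Finset.univ.filter (· ≠ i), μ j * (p i 0 - p j 0) / ‖p i - p j‖ ^ 3) ∧
       (b * p i 1 = ∑ j ∈ Finset.univ.filter (· ≠ i), μ j * (p i 1 - p j 1) / ‖p i - p j‖ ^ 3)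

section Stmt13Aux

variable {k : ℕ}

private lemma row_sum (a : ℝ) (μ : Fin k → ℝ) (x : Fin k → ℝ) (r : Fin k → Fin k → ℝ)
    (heq : ∀ i, a * x i = ∑ j ∈ Finset.univ.filter (· ≠ i), μ j * (x i - x j) / r i j ^ 3)
    (i : Fin k) :
    μ i * (a * x i) = ∑ j, μ i * (μ j * (x i - x j) / r i j ^ 3) := by
  rw [heq i, Finset.mul_sum, Finset.filter_ne']
  exact Finset.sum_erase _ (by simp)

private lemma pair_cancel (μ x : Fin k → ℝ) (r : Fin k → Fin k → ℝ)
    (hrs : ∀ i j, r j i = r i j) (T : Finset (Fin k)) :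
    ∑ i ∈ T, ∑ j ∈ T, μ i * (μ j * (x i - x j) / r i j ^ 3) = 0 := by
  have hanti : ∀ i j : Fin k, μ j * (μ i * (x j - x i) / r j i ^ 3)
      = -(μ i * (μ j * (x i - x j) / r i j ^ 3)) := by
    intro i j; rw [hrs i j]; ring
  have h2 : ∑ i ∈ T, ∑ j ∈ T, μ i * (μ j * (x i - x j) / r i j ^ 3)
      = -∑ i ∈ T, ∑ j ∈ T, μ i * (μ j * (x i - x j) / r i j ^ 3) := by
    conv_lhs => rw [Finset.sum_comm]
    rw [← Finset.sum_neg_distrib]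
    refine Finset.sum_congr rfl fun u _ => ?_
    rw [← Finset.sum_neg_distrib]
    exact Finset.sum_congr rfl fun v _ => hanti u v
  linarith

private lemma cut_bounds (a : ℝ) (ha : 0 < a) (μ : Fin k → ℝ) (hμ : ∀ i, 0 < μ i)
    (x : Fin k → ℝ) (r : Fin k → Fin k → ℝ)
    (hrs : ∀ i j, r j i = r i j) (hrx : ∀ i j, |x i - x j| ≤ r i j)
    (heq : ∀ i, a * x i = ∑ j ∈ Finset.univ.filter (· ≠ i), μ j * (x i - x j) / r i j ^ 3)
    (htot : ∑ i, μ i * x i = 0)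
    (w d : ℝ) (hh : 0 < w - d)
    (hT : ∃ i, w ≤ x i) (hTc : ∃ j, x j < w) (hd : ∀ j, x j < w → x j ≤ d) :
    a * (w - d) ^ 3 ≤ (∑ i, μ i) ∧
      ∀ X : ℝ, 0 < X → (∀ i, w ≤ x i → X / 3 < x i) →
        a * X * (w - d) ^ 2 ≤ 3 * (∑ i, μ i) := by
  classical
  obtain ⟨i0, hi0⟩ := hT
  obtain ⟨j0, hj0⟩ := hTc
  have hi0T : i0 ∈ Finset.univ.filter (fun i => w ≤ x i) :=
    Finset.mem_filter.mpr ⟨Finset.mem_univ _, hi0⟩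
  have hj0Tc : j0 ∈ Finset.univ.filter (fun i => ¬ w ≤ x i) :=
    Finset.mem_filter.mpr ⟨Finset.mem_univ _, not_le.mpr hj0⟩
  have hm : 0 < ∑ i ∈ Finset.univ.filter (fun i => w ≤ x i), μ i :=
    Finset.sum_pos (fun i _ => hμ i) ⟨i0, hi0T⟩
  have hm' : 0 < ∑ i ∈ Finset.univ.filter (fun i => ¬ w ≤ x i), μ i :=
    Finset.sum_pos (fun i _ => hμ i) ⟨j0, hj0Tc⟩
  have hM : 0 < ∑ i, μ i := Finset.sum_pos (fun i _ => hμ i) ⟨i0, Finset.mem_univ _⟩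
  have hsplitμ : (∑ i ∈ Finset.univ.filter (fun i => w ≤ x i), μ i)
      + ∑ i ∈ Finset.univ.filter (fun i => ¬ w ≤ x i), μ i = ∑ i, μ i :=
    Finset.sum_filter_add_sum_filter_not _ _ _
  have hsplitx : (∑ i ∈ Finset.univ.filter (fun i => w ≤ x i), μ i * x i)
      + ∑ i ∈ Finset.univ.filter (fun i => ¬ w ≤ x i), μ i * x i = 0 := by
    rw [Finset.sum_filter_add_sum_filter_not]; exact htot
  -- main identity
  have hmain : a * ∑ i ∈ Finset.univ.filter (fun i => w ≤ x i), μ i * x i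
      = ∑ i ∈ Finset.univ.filter (fun i => w ≤ x i),
          ∑ j ∈ Finset.univ.filter (fun i => ¬ w ≤ x i), μ i * (μ j * (x i - x j) / r i j ^ 3) := by
    calc a * ∑ i ∈ Finset.univ.filter (fun i => w ≤ x i), μ i * x i
        = ∑ i ∈ Finset.univ.filter (fun i => w ≤ x i), μ i * (a * x i) := by
          rw [Finset.mul_sum]; exact Finset.sum_congr rfl fun i _ => by ring
    _ = ∑ i ∈ Finset.univ.filter (fun i => w ≤ x i), ∑ j, μ i * (μ j * (x i - x j) / r i j ^ 3) :=
          Finset.sum_congr rfl fun i _ => row_sum a μ x r heq i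
    _ = ∑ i ∈ Finset.univ.filter (fun i => w ≤ x i),
          ((∑ j ∈ Finset.univ.filter (fun i => w ≤ x i), μ i * (μ j * (x i - x j) / r i j ^ 3))
            + ∑ j ∈ Finset.univ.filter (fun i => ¬ w ≤ x i), μ i * (μ j * (x i - x j) / r i j ^ 3)) :=
          Finset.sum_congr rfl fun i _ => (Finset.sum_filter_add_sum_filter_not _ _ _).symm
    _ = (∑ i ∈ Finset.univ.filter (fun i => w ≤ x i),
            ∑ j ∈ Finset.univ.filter (fun i => w ≤ x i), μ i * (μ j * (x i - x j) / r i j ^ 3))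
          + ∑ i ∈ Finset.univ.filter (fun i => w ≤ x i),
            ∑ j ∈ Finset.univ.filter (fun i => ¬ w ≤ x i), μ i * (μ j * (x i - x j) / r i j ^ 3) :=
          Finset.sum_add_distrib
    _ = _ := by rw [pair_cancel μ x r hrs, zero_add]
  -- upper bound on cross sum
  have hcross : ∑ i ∈ Finset.univ.filter (fun i => w ≤ x i),
      ∑ j ∈ Finset.univ.filter (fun i => ¬ w ≤ x i), μ i * (μ j * (x i - x j) / r i j ^ 3)
      ≤ (∑ i ∈ Finset.univ.filter (fun i => w ≤ x i), μ i)
        * (∑ j ∈ Finset.univ.filter (fun i => ¬ w ≤ x i), μ j) / (w - d) ^ 2 := by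
    have hterm : ∀ i ∈ Finset.univ.filter (fun i => w ≤ x i),
        ∀ j ∈ Finset.univ.filter (fun i => ¬ w ≤ x i),
        μ i * (μ j * (x i - x j) / r i j ^ 3) ≤ μ i * μ j * (1 / (w - d) ^ 2) := by
      intro i hi j hj
      have hxi : w ≤ x i := (Finset.mem_filter.mp hi).2
      have hxj : x j ≤ d := hd j (not_le.mp (Finset.mem_filter.mp hj).2)
      have hD : w - d ≤ x i - x j := by linarith
      have hD0 : 0 < x i - x j := lt_of_lt_of_le hh hD
      have hDne : x i - x j ≠ 0 := hD0.ne'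
      have hr : x i - x j ≤ r i j := le_trans (le_abs_self _) (hrx i j)
      have key : (x i - x j) / r i j ^ 3 ≤ 1 / (w - d) ^ 2 := by
        have h1 : (x i - x j) / r i j ^ 3 ≤ (x i - x j) / (x i - x j) ^ 3 :=
          div_le_div_of_nonneg_left hD0.le (pow_pos hD0 3) (pow_le_pow_left₀ hD0.le hr 3)
        have h2 : (x i - x j) / (x i - x j) ^ 3 = 1 / (x i - x j) ^ 2 := by
          field_simp
        have h3 : 1 / (x i - x j) ^ 2 ≤ 1 / (w - d) ^ 2 :=
          one_div_le_one_div_of_le (pow_pos hh 2) (pow_le_pow_left₀ hh.le hD 2)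
        linarith
      calc μ i * (μ j * (x i - x j) / r i j ^ 3)
          = (μ i * μ j) * ((x i - x j) / r i j ^ 3) := by ring
      _ ≤ (μ i * μ j) * (1 / (w - d) ^ 2) := by
          exact mul_le_mul_of_nonneg_left key (mul_nonneg (hμ i).le (hμ j).le)
    calc ∑ i ∈ Finset.univ.filter (fun i => w ≤ x i),
        ∑ j ∈ Finset.univ.filter (fun i => ¬ w ≤ x i), μ i * (μ j * (x i - x j) / r i j ^ 3)
        ≤ ∑ i ∈ Finset.univ.filter (fun i => w ≤ x i),
            ∑ j ∈ Finset.univ.filter (fun i => ¬ w ≤ x i), μ i * μ j * (1 / (w - d) ^ 2) :=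
          Finset.sum_le_sum fun i hi => Finset.sum_le_sum fun j hj => hterm i hi j hj
    _ = ((∑ i ∈ Finset.univ.filter (fun i => w ≤ x i), μ i)
          * ∑ j ∈ Finset.univ.filter (fun i => ¬ w ≤ x i), μ j) * (1 / (w - d) ^ 2) := by
          rw [Finset.sum_mul_sum, Finset.sum_mul]
          exact Finset.sum_congr rfl fun i _ => by rw [Finset.sum_mul]
    _ = _ := by ring
  -- lower bound identity
  have hC : ∑ j ∈ Finset.univ.filter (fun i => ¬ w ≤ x i), μ j * x j
      = -(∑ i ∈ Finset.univ.filter (fun i => w ≤ x i), μ i * x i) := by linarith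
  have hidentity : ∑ i ∈ Finset.univ.filter (fun i => w ≤ x i),
      ∑ j ∈ Finset.univ.filter (fun i => ¬ w ≤ x i), μ i * μ j * (x i - x j)
      = (∑ i, μ i) * ∑ i ∈ Finset.univ.filter (fun i => w ≤ x i), μ i * x i := by
    calc ∑ i ∈ Finset.univ.filter (fun i => w ≤ x i),
        ∑ j ∈ Finset.univ.filter (fun i => ¬ w ≤ x i), μ i * μ j * (x i - x j)
        = ∑ i ∈ Finset.univ.filter (fun i => w ≤ x i),
            ((μ i * x i) * (∑ j ∈ Finset.univ.filter (fun i => ¬ w ≤ x i), μ j)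
              - μ i * ∑ j ∈ Finset.univ.filter (fun i => ¬ w ≤ x i), μ j * x j) := by
          refine Finset.sum_congr rfl fun i _ => ?_
          rw [Finset.mul_sum, Finset.mul_sum, ← Finset.sum_sub_distrib]
          exact Finset.sum_congr rfl fun j _ => by ring
    _ = (∑ i ∈ Finset.univ.filter (fun i => w ≤ x i), μ i * x i)
          * (∑ j ∈ Finset.univ.filter (fun i => ¬ w ≤ x i), μ j)
        - (∑ i ∈ Finset.univ.filter (fun i => w ≤ x i), μ i)
          * ∑ j ∈ Finset.univ.filter (fun i => ¬ w ≤ x i), μ j * x j := by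
          rw [Finset.sum_sub_distrib, ← Finset.sum_mul, ← Finset.sum_mul]
    _ = _ := by rw [hC, ← hsplitμ]; ring
  have hlower : (∑ i ∈ Finset.univ.filter (fun i => w ≤ x i), μ i)
      * (∑ j ∈ Finset.univ.filter (fun i => ¬ w ≤ x i), μ j) * (w - d)
      ≤ (∑ i, μ i) * ∑ i ∈ Finset.univ.filter (fun i => w ≤ x i), μ i * x i := by
    rw [← hidentity]
    have e : ∑ i ∈ Finset.univ.filter (fun i => w ≤ x i),
        ∑ j ∈ Finset.univ.filter (fun i => ¬ w ≤ x i), μ i * μ j * (w - d)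
        = (∑ i ∈ Finset.univ.filter (fun i => w ≤ x i), μ i)
          * (∑ j ∈ Finset.univ.filter (fun i => ¬ w ≤ x i), μ j) * (w - d) := by
      rw [Finset.sum_mul_sum, Finset.sum_mul]
      exact Finset.sum_congr rfl fun i _ => by rw [Finset.sum_mul]
    rw [← e]
    refine Finset.sum_le_sum fun i hi => Finset.sum_le_sum fun j hj => ?_
    have hxi : w ≤ x i := (Finset.mem_filter.mp hi).2
    have hxj : x j ≤ d := hd j (not_le.mp (Finset.mem_filter.mp hj).2)
    have : w - d ≤ x i - x j := by linarith
    exact mul_le_mul_of_nonneg_left this (mul_nonneg (hμ i).le (hμ j).le)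
  have hup2 : a * (∑ i ∈ Finset.univ.filter (fun i => w ≤ x i), μ i * x i) * (w - d) ^ 2
      ≤ (∑ i ∈ Finset.univ.filter (fun i => w ≤ x i), μ i)
        * ∑ j ∈ Finset.univ.filter (fun i => ¬ w ≤ x i), μ j := by
    have h := hmain ▸ hcross
    exact (le_div_iff₀ (pow_pos hh 2)).mp (le_of_eq_of_le hmain hcross)
  constructor
  · have c3 : (a * (w - d) ^ 3) * ((∑ i ∈ Finset.univ.filter (fun i => w ≤ x i), μ i)
        * ∑ j ∈ Finset.univ.filter (fun i => ¬ w ≤ x i), μ j)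
        ≤ (∑ i, μ i) * ((∑ i ∈ Finset.univ.filter (fun i => w ≤ x i), μ i)
        * ∑ j ∈ Finset.univ.filter (fun i => ¬ w ≤ x i), μ j) := by
      calc (a * (w - d) ^ 3) * ((∑ i ∈ Finset.univ.filter (fun i => w ≤ x i), μ i)
            * ∑ j ∈ Finset.univ.filter (fun i => ¬ w ≤ x i), μ j)
          = (a * (w - d) ^ 2) * ((∑ i ∈ Finset.univ.filter (fun i => w ≤ x i), μ i)
            * (∑ j ∈ Finset.univ.filter (fun i => ¬ w ≤ x i), μ j) * (w - d)) := by ring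
      _ ≤ (a * (w - d) ^ 2) * ((∑ i, μ i) * ∑ i ∈ Finset.univ.filter (fun i => w ≤ x i), μ i * x i) :=
            mul_le_mul_of_nonneg_left hlower (by positivity)
      _ = (∑ i, μ i) * (a * (∑ i ∈ Finset.univ.filter (fun i => w ≤ x i), μ i * x i) * (w - d) ^ 2) := by
            ring
      _ ≤ (∑ i, μ i) * ((∑ i ∈ Finset.univ.filter (fun i => w ≤ x i), μ i)
            * ∑ j ∈ Finset.univ.filter (fun i => ¬ w ≤ x i), μ j) :=
            mul_le_mul_of_nonneg_left hup2 hM.le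
    exact le_of_mul_le_mul_right c3 (mul_pos hm hm')
  · intro X hX hmem
    have hSlo : (∑ i ∈ Finset.univ.filter (fun i => w ≤ x i), μ i) * (X / 3)
        ≤ ∑ i ∈ Finset.univ.filter (fun i => w ≤ x i), μ i * x i := by
      rw [Finset.sum_mul]
      exact Finset.sum_le_sum fun i hi =>
        mul_le_mul_of_nonneg_left (hmem i (Finset.mem_filter.mp hi).2).le (hμ i).le
    have hm'M : (∑ j ∈ Finset.univ.filter (fun i => ¬ w ≤ x i), μ j) ≤ ∑ i, μ i := by linarith
    have c1 : a * ((∑ i ∈ Finset.univ.filter (fun i => w ≤ x i), μ i) * (X / 3)) * (w - d) ^ 2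
        ≤ (∑ i ∈ Finset.univ.filter (fun i => w ≤ x i), μ i)
          * ∑ j ∈ Finset.univ.filter (fun i => ¬ w ≤ x i), μ j := by
      refine le_trans ?_ hup2
      exact mul_le_mul_of_nonneg_right (mul_le_mul_of_nonneg_left hSlo ha.le) (sq_nonneg _)
    have c2 : (∑ i ∈ Finset.univ.filter (fun i => w ≤ x i), μ i) * (a * X * (w - d) ^ 2)
        ≤ (∑ i ∈ Finset.univ.filter (fun i => w ≤ x i), μ i) * (3 * ∑ i, μ i) := by
      have step : (∑ i ∈ Finset.univ.filter (fun i => w ≤ x i), μ i)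
          * (∑ j ∈ Finset.univ.filter (fun i => ¬ w ≤ x i), μ j)
          ≤ (∑ i ∈ Finset.univ.filter (fun i => w ≤ x i), μ i) * (∑ i, μ i) :=
        mul_le_mul_of_nonneg_left hm'M hm.le
      calc (∑ i ∈ Finset.univ.filter (fun i => w ≤ x i), μ i) * (a * X * (w - d) ^ 2)
          = 3 * (a * ((∑ i ∈ Finset.univ.filter (fun i => w ≤ x i), μ i) * (X / 3)) * (w - d) ^ 2) := by
            ring
      _ ≤ 3 * ((∑ i ∈ Finset.univ.filter (fun i => w ≤ x i), μ i)
            * ∑ j ∈ Finset.univ.filter (fun i => ¬ w ≤ x i), μ j) := by linarith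
      _ ≤ 3 * ((∑ i ∈ Finset.univ.filter (fun i => w ≤ x i), μ i) * (∑ i, μ i)) := by linarith
      _ = (∑ i ∈ Finset.univ.filter (fun i => w ≤ x i), μ i) * (3 * ∑ i, μ i) := by ring
    exact le_of_mul_le_mul_left c2 hm

private lemma total_zero (a : ℝ) (ha : a ≠ 0) (μ x : Fin k → ℝ) (r : Fin k → Fin k → ℝ)
    (hrs : ∀ i j, r j i = r i j)
    (heq : ∀ i, a * x i = ∑ j ∈ Finset.univ.filter (· ≠ i), μ j * (x i - x j) / r i j ^ 3) :
    ∑ i, μ i * x i = 0 := by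
  have h1 : a * ∑ i, μ i * x i = 0 := by
    calc a * ∑ i, μ i * x i = ∑ i, μ i * (a * x i) := by
          rw [Finset.mul_sum]; exact Finset.sum_congr rfl fun i _ => by ring
    _ = ∑ i, ∑ j, μ i * (μ j * (x i - x j) / r i j ^ 3) :=
          Finset.sum_congr rfl fun i _ => row_sum a μ x r heq i
    _ = 0 := pair_cancel μ x r hrs Finset.univ
  exact (mul_eq_zero.mp h1).resolve_left ha

private lemma descent (x : Fin k → ℝ) (X G w0 : ℝ) (hG : 0 ≤ G)
    (hX : ∀ i, x i ≤ X) (hXmem : ∃ i, x i = X)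
    (HCUT : ∀ w d : ℝ, w0 < w → 0 < w - d → (∃ i, w ≤ x i) → (∃ j, x j < w) →
      (∀ j, x j < w → x j ≤ d) → w - d ≤ G) :
    ∀ n : ℕ, ∀ w : ℝ, w0 ≤ w → (∃ j, x j ≤ w) →
      (Finset.univ.filter fun i => w < x i).card ≤ n → X ≤ w + n * G := by
  intro n
  induction n with
  | zero =>
    intro w _ _ hcard
    obtain ⟨i1, hi1⟩ := hXmem
    have hempty : (Finset.univ.filter fun i => w < x i) = ∅ :=
      Finset.card_eq_zero.mp (Nat.le_zero.mp hcard)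
    have hle : x i1 ≤ w := by
      by_contra hcon
      push_neg at hcon
      have hmem : i1 ∈ Finset.univ.filter fun i => w < x i :=
        Finset.mem_filter.mpr ⟨Finset.mem_univ _, hcon⟩
      rw [hempty] at hmem
      exact absurd hmem (Finset.notMem_empty _)
    rw [← hi1]
    push_cast
    linarith
  | succ n ih =>
    intro w hw0 hb hcard
    by_cases hne : (Finset.univ.filter fun i => w < x i).Nonempty
    · obtain ⟨i2, hi2mem, hi2min⟩ := Finset.exists_min_image _ x hne
      have hww' : w < x i2 := (Finset.mem_filter.mp hi2mem).2
      have hstep : x i2 - w ≤ G := by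
        refine HCUT (x i2) w (lt_of_le_of_lt hw0 hww') (by linarith) ⟨i2, le_rfl⟩ ?_ ?_
        · obtain ⟨j, hj⟩ := hb; exact ⟨j, lt_of_le_of_lt hj hww'⟩
        · intro j hj
          by_contra hcon
          push_neg at hcon
          exact absurd (hi2min j (Finset.mem_filter.mpr ⟨Finset.mem_univ _, hcon⟩)) (not_le.mpr hj)
      have hsub : (Finset.univ.filter fun i => x i2 < x i).card ≤ n := by
        have hss : (Finset.univ.filter fun i => x i2 < x i)
            ⊆ (Finset.univ.filter fun i => w < x i).erase i2 := by
          intro j hj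
          have hj2 : x i2 < x j := (Finset.mem_filter.mp hj).2
          refine Finset.mem_erase.mpr ⟨?_, Finset.mem_filter.mpr ⟨Finset.mem_univ _, lt_trans hww' hj2⟩⟩
          intro hje; rw [hje] at hj2; exact lt_irrefl _ hj2
        have h1 := Finset.card_le_card hss
        rw [Finset.card_erase_of_mem hi2mem] at h1
        omega
      have hIH := ih (x i2) (le_of_lt (lt_of_le_of_lt hw0 hww')) ⟨i2, le_rfl⟩ hsub
      push_cast
      push_cast at hIH
      linarith
    · obtain ⟨i1, hi1⟩ := hXmem
      have hle : x i1 ≤ w := by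
        by_contra hcon; push_neg at hcon
        exact hne ⟨i1, Finset.mem_filter.mpr ⟨Finset.mem_univ _, hcon⟩⟩
      have hng : (0:ℝ) ≤ ((n:ℝ) + 1) * G := by positivity
      rw [← hi1]
      push_cast
      linarith

private lemma core (hk : 2 ≤ k) (a : ℝ) (ha : 0 < a) (μ : Fin k → ℝ) (hμ : ∀ i, 0 < μ i)
    (x : Fin k → ℝ) (r : Fin k → Fin k → ℝ)
    (hrs : ∀ i j, r j i = r i j) (hrx : ∀ i j, |x i - x j| ≤ r i j)
    (heq : ∀ i, a * x i = ∑ j ∈ Finset.univ.filter (· ≠ i), μ j * (x i - x j) / r i j ^ 3) :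
    (∀ i, x i ≤ ((k:ℝ) - 1) * ((∑ i, μ i) / a) ^ ((1:ℝ)/3)) ∧
      (4 ≤ k → ∀ i, x i ≤ ((2:ℝ) ^ ((1:ℝ)/3) + (2:ℝ) ^ (-(2:ℝ)/3)) * ((k:ℝ) - 2) ^ ((2:ℝ)/3)
        * ((∑ i, μ i) / a) ^ ((1:ℝ)/3)) := by
  classical
  have hk0 : 0 < k := by omega
  have hne : (Finset.univ : Finset (Fin k)).Nonempty := ⟨⟨0, hk0⟩, Finset.mem_univ _⟩
  have hM : 0 < ∑ i, μ i := Finset.sum_pos (fun i _ => hμ i) hne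
  have htot : ∑ i, μ i * x i = 0 := total_zero a ha.ne' μ x r hrs heq
  obtain ⟨i1, -, hi1max⟩ := Finset.exists_max_image Finset.univ x hne
  obtain ⟨j0, -, hj0min⟩ := Finset.exists_min_image Finset.univ x hne
  have hX : ∀ i, x i ≤ x i1 := fun i => hi1max i (Finset.mem_univ i)
  have hmin : ∀ i, x j0 ≤ x i := fun i => hj0min i (Finset.mem_univ i)
  have hj00 : x j0 ≤ 0 := by
    by_contra hcon; push_neg at hcon
    have hpos : 0 < ∑ i, μ i * x i :=
      Finset.sum_pos (fun i _ => mul_pos (hμ i) (lt_of_lt_of_le hcon (hmin i))) hne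
    rw [htot] at hpos; exact lt_irrefl 0 hpos
  have hMa : 0 < (∑ i, μ i) / a := div_pos hM ha
  have hu : 0 < ((∑ i, μ i) / a) ^ ((1:ℝ)/3) := Real.rpow_pos_of_pos hMa _
  have hcard1 : (Finset.univ.filter fun i => x j0 < x i).card ≤ k - 1 := by
    have hss : (Finset.univ.filter fun i => x j0 < x i) ⊆ Finset.univ.erase j0 := by
      intro i hi
      refine Finset.mem_erase.mpr ⟨?_, Finset.mem_univ _⟩
      intro hij; rw [hij] at hi; exact lt_irrefl _ (Finset.mem_filter.mp hi).2
    have h1 := Finset.card_le_card hss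
    rwa [Finset.card_erase_of_mem (Finset.mem_univ _), Finset.card_univ, Fintype.card_fin] at h1
  -- bound 1
  have hb1 : x i1 ≤ ((k:ℝ) - 1) * ((∑ i, μ i) / a) ^ ((1:ℝ)/3) := by
    have HCUT : ∀ w dd : ℝ, x j0 < w → 0 < w - dd → (∃ i, w ≤ x i) → (∃ j, x j < w) →
        (∀ j, x j < w → x j ≤ dd) → w - dd ≤ ((∑ i, μ i) / a) ^ ((1:ℝ)/3) := by
      intro w dd _ hhh hTne hTcne hdd
      have hc := (cut_bounds a ha μ hμ x r hrs hrx heq htot w dd hhh hTne hTcne hdd).1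
      have h3 : (w - dd) ^ 3 ≤ (∑ i, μ i) / a := by
        rw [le_div_iff₀ ha]; linarith
      have heq1 : ((w - dd) ^ (3:ℕ) : ℝ) ^ ((1:ℝ)/3) = w - dd := by
        rw [← Real.rpow_natCast (w - dd) 3, ← Real.rpow_mul hhh.le]
        norm_num
      calc w - dd = ((w - dd) ^ (3:ℕ)) ^ ((1:ℝ)/3) := heq1.symm
      _ ≤ ((∑ i, μ i) / a) ^ ((1:ℝ)/3) := Real.rpow_le_rpow (by positivity) h3 (by norm_num)
    have hdes := descent x (x i1) (((∑ i, μ i) / a) ^ ((1:ℝ)/3)) (x j0) hu.le hX ⟨i1, rfl⟩ HCUT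
      (k - 1) (x j0) le_rfl ⟨j0, le_rfl⟩ hcard1
    have hcast : ((k - 1 : ℕ) : ℝ) = (k:ℝ) - 1 := by
      rw [Nat.cast_sub (by omega)]; norm_num
    rw [hcast] at hdes
    linarith
  refine ⟨fun i => le_trans (hX i) hb1, ?_⟩
  intro hk4 i
  have hk2 : (0:ℝ) ≤ (k:ℝ) - 2 := by
    have h4 : (4:ℝ) ≤ (k:ℝ) := by exact_mod_cast hk4
    linarith
  have hB0 : 0 ≤ ((2:ℝ) ^ ((1:ℝ)/3) + (2:ℝ) ^ (-(2:ℝ)/3)) * ((k:ℝ) - 2) ^ ((2:ℝ)/3)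
      * ((∑ i, μ i) / a) ^ ((1:ℝ)/3) := by
    refine mul_nonneg (mul_nonneg ?_ (Real.rpow_nonneg hk2 _)) hu.le
    positivity
  by_cases hXpos : x i1 ≤ 0
  · exact le_trans (hX i) (le_trans hXpos hB0)
  push_neg at hXpos
  have hGarg : 0 ≤ 3 * (∑ i, μ i) / (a * x i1) := by positivity
  have hG0 : 0 ≤ Real.sqrt (3 * (∑ i, μ i) / (a * x i1)) := Real.sqrt_nonneg _
  have HCUT2core : ∀ w dd : ℝ, 0 < w - dd → (∃ i, w ≤ x i) → (∃ j, x j < w) →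
      (∀ j, x j < w → x j ≤ dd) → (∀ i, w ≤ x i → x i1 / 3 < x i) →
      w - dd ≤ Real.sqrt (3 * (∑ i, μ i) / (a * x i1)) := by
    intro w dd hhh hTne hTcne hdd hmem
    have hc := (cut_bounds a ha μ hμ x r hrs hrx heq htot w dd hhh hTne hTcne hdd).2 (x i1) hXpos hmem
    have h2 : (w - dd) ^ 2 ≤ 3 * (∑ i, μ i) / (a * x i1) := by
      rw [le_div_iff₀ (mul_pos ha hXpos)]
      nlinarith [hc]
    calc w - dd = Real.sqrt ((w - dd) ^ 2) := (Real.sqrt_sq hhh.le).symm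
    _ ≤ _ := Real.sqrt_le_sqrt h2
  have hXG : x i1 ≤ 3 / 2 * ((k:ℝ) - 2) * Real.sqrt (3 * (∑ i, μ i) / (a * x i1)) := by
    by_cases hA : (Finset.univ.filter fun i => x i1 / 3 < x i).card ≤ k - 2
    · have HCUTA : ∀ w dd : ℝ, x i1 / 3 < w → 0 < w - dd → (∃ i, w ≤ x i) → (∃ j, x j < w) →
          (∀ j, x j < w → x j ≤ dd) → w - dd ≤ Real.sqrt (3 * (∑ i, μ i) / (a * x i1)) :=
        fun w dd hw hhh h1 h2 h3 =>
          HCUT2core w dd hhh h1 h2 h3 (fun i' hi' => lt_of_lt_of_le hw hi')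
      have hdes := descent x (x i1) (Real.sqrt (3 * (∑ i, μ i) / (a * x i1))) (x i1 / 3) hG0 hX
        ⟨i1, rfl⟩ HCUTA (k - 2) (x i1 / 3) le_rfl ⟨j0, by linarith⟩ hA
      have hcast : ((k - 2 : ℕ) : ℝ) = (k:ℝ) - 2 := by
        rw [Nat.cast_sub (by omega)]; norm_num
      rw [hcast] at hdes
      linarith
    · push_neg at hA
      have hcompl : (Finset.univ.filter fun i => ¬ x i1 / 3 < x i).card ≤ 1 := by
        have hsum := Finset.card_filter_add_card_filter_not
          (s := (Finset.univ : Finset (Fin k))) (p := fun i => x i1 / 3 < x i)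
        rw [Finset.card_univ, Fintype.card_fin] at hsum
        omega
      have hj0c : j0 ∈ Finset.univ.filter fun i => ¬ x i1 / 3 < x i :=
        Finset.mem_filter.mpr ⟨Finset.mem_univ _, not_lt.mpr (by linarith)⟩
      have huniq : ∀ i', ¬ x i1 / 3 < x i' → i' = j0 := by
        intro i' hi'
        exact Finset.card_le_one.mp hcompl i'
          (Finset.mem_filter.mpr ⟨Finset.mem_univ _, hi'⟩) j0 hj0c
      have hmemB : ∀ i', x j0 < x i' → x i1 / 3 < x i' := by
        intro i' hi'
        by_contra hcon
        rw [huniq i' hcon] at hi'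
        exact lt_irrefl _ hi'
      have HCUTB : ∀ w dd : ℝ, x j0 < w → 0 < w - dd → (∃ i, w ≤ x i) → (∃ j, x j < w) →
          (∀ j, x j < w → x j ≤ dd) → w - dd ≤ Real.sqrt (3 * (∑ i, μ i) / (a * x i1)) :=
        fun w dd hw hhh h1 h2 h3 =>
          HCUT2core w dd hhh h1 h2 h3 (fun i' hi' => hmemB i' (lt_of_lt_of_le hw hi'))
      have hdes := descent x (x i1) (Real.sqrt (3 * (∑ i, μ i) / (a * x i1))) (x j0) hG0 hX
        ⟨i1, rfl⟩ HCUTB (k - 1) (x j0) le_rfl ⟨j0, le_rfl⟩ hcard1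
      have hcast : ((k - 1 : ℕ) : ℝ) = (k:ℝ) - 1 := by
        rw [Nat.cast_sub (by omega)]; norm_num
      rw [hcast] at hdes
      have hk4' : (4:ℝ) ≤ (k:ℝ) := by exact_mod_cast hk4
      nlinarith [hG0, hj00, hdes]
  -- final algebra
  have hX3 : (x i1) ^ 3 ≤ 27 / 4 * ((k:ℝ) - 2) ^ 2 * ((∑ i, μ i) / a) := by
    have hG2 : Real.sqrt (3 * (∑ i, μ i) / (a * x i1)) ^ 2 = 3 * (∑ i, μ i) / (a * x i1) :=
      Real.sq_sqrt hGarg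
    have h1 : (x i1) ^ 2 ≤ (3 / 2 * ((k:ℝ) - 2)) ^ 2 * (3 * (∑ i, μ i) / (a * x i1)) := by
      calc (x i1) ^ 2 ≤ (3 / 2 * ((k:ℝ) - 2) * Real.sqrt (3 * (∑ i, μ i) / (a * x i1))) ^ 2 :=
            pow_le_pow_left₀ hXpos.le hXG 2
      _ = (3 / 2 * ((k:ℝ) - 2)) ^ 2 * Real.sqrt (3 * (∑ i, μ i) / (a * x i1)) ^ 2 := by ring
      _ = _ := by rw [hG2]
    have h2 := mul_le_mul_of_nonneg_right h1 (le_of_lt (mul_pos ha hXpos))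
    rw [mul_assoc, div_mul_cancel₀ _ (ne_of_gt (mul_pos ha hXpos))] at h2
    rw [show (27:ℝ) / 4 * ((k:ℝ) - 2) ^ 2 * ((∑ i, μ i) / a)
      = (27 / 4 * ((k:ℝ) - 2) ^ 2 * (∑ i, μ i)) / a by ring, le_div_iff₀ ha]
    nlinarith [h2]
  have e0 : (2:ℝ) ^ ((1:ℝ)/3) + (2:ℝ) ^ (-(2:ℝ)/3) = 3 * (2:ℝ) ^ (-(2:ℝ)/3) := by
    rw [show (1:ℝ)/3 = 1 + (-(2:ℝ)/3) by norm_num, Real.rpow_add two_pos, Real.rpow_one]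
    ring
  have e1 : ((2:ℝ) ^ (-(2:ℝ)/3)) ^ (3:ℕ) = 1 / 4 := by
    rw [← Real.rpow_natCast ((2:ℝ) ^ (-(2:ℝ)/3)) 3, ← Real.rpow_mul (by norm_num : (0:ℝ) ≤ 2)]
    rw [show (-(2:ℝ)/3) * ((3:ℕ):ℝ) = ((-2:ℤ):ℝ) by push_cast; ring, Real.rpow_intCast]
    norm_num
  have e2 : (((k:ℝ) - 2) ^ ((2:ℝ)/3)) ^ (3:ℕ) = ((k:ℝ) - 2) ^ (2:ℕ) := by
    rw [← Real.rpow_natCast (((k:ℝ) - 2) ^ ((2:ℝ)/3)) 3, ← Real.rpow_mul hk2]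
    rw [show ((2:ℝ)/3) * ((3:ℕ):ℝ) = ((2:ℕ):ℝ) by push_cast; ring, Real.rpow_natCast]
  have e3 : (((∑ i, μ i) / a) ^ ((1:ℝ)/3)) ^ (3:ℕ) = (∑ i, μ i) / a := by
    rw [← Real.rpow_natCast (((∑ i, μ i) / a) ^ ((1:ℝ)/3)) 3, ← Real.rpow_mul hMa.le]
    rw [show ((1:ℝ)/3) * ((3:ℕ):ℝ) = (1:ℝ) by push_cast; ring, Real.rpow_one]
  have hB3 : (((2:ℝ) ^ ((1:ℝ)/3) + (2:ℝ) ^ (-(2:ℝ)/3)) * ((k:ℝ) - 2) ^ ((2:ℝ)/3)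
      * ((∑ i, μ i) / a) ^ ((1:ℝ)/3)) ^ 3 = 27 / 4 * ((k:ℝ) - 2) ^ 2 * ((∑ i, μ i) / a) := by
    calc (((2:ℝ) ^ ((1:ℝ)/3) + (2:ℝ) ^ (-(2:ℝ)/3)) * ((k:ℝ) - 2) ^ ((2:ℝ)/3)
        * ((∑ i, μ i) / a) ^ ((1:ℝ)/3)) ^ 3
        = ((2:ℝ) ^ ((1:ℝ)/3) + (2:ℝ) ^ (-(2:ℝ)/3)) ^ (3:ℕ) * (((k:ℝ) - 2) ^ ((2:ℝ)/3)) ^ (3:ℕ)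
          * ((((∑ i, μ i) / a) ^ ((1:ℝ)/3)) ^ (3:ℕ)) := by ring
    _ = (3 * (2:ℝ) ^ (-(2:ℝ)/3)) ^ (3:ℕ) * ((k:ℝ) - 2) ^ (2:ℕ) * ((∑ i, μ i) / a) := by
          rw [e0, e2, e3]
    _ = 27 * (((2:ℝ) ^ (-(2:ℝ)/3)) ^ (3:ℕ)) * ((k:ℝ) - 2) ^ (2:ℕ) * ((∑ i, μ i) / a) := by ring
    _ = _ := by rw [e1]; ring
  have hXB3 : (x i1) ^ 3 ≤ (((2:ℝ) ^ ((1:ℝ)/3) + (2:ℝ) ^ (-(2:ℝ)/3)) * ((k:ℝ) - 2) ^ ((2:ℝ)/3)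
      * ((∑ i, μ i) / a) ^ ((1:ℝ)/3)) ^ 3 := by
    rw [hB3]; exact hX3
  exact le_trans (hX i) (le_of_pow_le_pow_left₀ (by norm_num) hB0 hXB3)

private lemma coord_abs_le (v : E2) (l : Fin 2) : |v l| ≤ ‖v‖ := by
  have h1 : |v l| ^ 2 ≤ ∑ i, ‖v i‖ ^ 2 := by
    have h := Finset.single_le_sum (f := fun i => ‖v i‖ ^ 2)
      (fun i _ => by positivity) (Finset.mem_univ l)
    simpa [Real.norm_eq_abs, sq_abs] using h
  calc |v l| = Real.sqrt (|v l| ^ 2) := (Real.sqrt_sq (abs_nonneg _)).symm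
  _ ≤ Real.sqrt (∑ i, ‖v i‖ ^ 2) := Real.sqrt_le_sqrt h1
  _ = ‖v‖ := (EuclideanSpace.norm_eq v).symm

private lemma coord_bounds (hk : 2 ≤ k) (a : ℝ) (ha : 0 < a) (μ : Fin k → ℝ)
    (hμ : ∀ i, 0 < μ i) (x : Fin k → ℝ) (r : Fin k → Fin k → ℝ)
    (hrs : ∀ i j, r j i = r i j) (hrx : ∀ i j, |x i - x j| ≤ r i j)
    (heq : ∀ i, a * x i = ∑ j ∈ Finset.univ.filter (· ≠ i), μ j * (x i - x j) / r i j ^ 3) :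
    (∀ i, |x i| ≤ ((k:ℝ) - 1) * ((∑ i, μ i) / a) ^ ((1:ℝ)/3)) ∧
      (4 ≤ k → ∀ i, |x i| ≤ ((2:ℝ) ^ ((1:ℝ)/3) + (2:ℝ) ^ (-(2:ℝ)/3)) * ((k:ℝ) - 2) ^ ((2:ℝ)/3)
        * ((∑ i, μ i) / a) ^ ((1:ℝ)/3)) := by
  have hpos := core hk a ha μ hμ x r hrs hrx heq
  have hrxn : ∀ i j, |(fun i => -x i) i - (fun i => -x i) j| ≤ r i j := by
    intro i j
    simp only
    rw [show -x i - -x j = -(x i - x j) by ring, abs_neg]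
    exact hrx i j
  have heqn : ∀ i, a * (fun i => -x i) i
      = ∑ j ∈ Finset.univ.filter (· ≠ i), μ j * ((fun i => -x i) i - (fun i => -x i) j) / r i j ^ 3 := by
    intro i
    simp only
    have h2 : ∑ j ∈ Finset.univ.filter (· ≠ i), μ j * (-x i - -x j) / r i j ^ 3
        = -∑ j ∈ Finset.univ.filter (· ≠ i), μ j * (x i - x j) / r i j ^ 3 := by
      rw [← Finset.sum_neg_distrib]
      exact Finset.sum_congr rfl fun j _ => by ring
    rw [h2, ← heq i]; ring
  have hneg := core hk a ha μ hμ (fun i => -x i) r hrs hrxn heqn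
  constructor
  · intro i
    rw [abs_le]
    have hlo := hneg.1 i
    exact ⟨by linarith, hpos.1 i⟩
  · intro h4 i
    rw [abs_le]
    have hlo := hneg.2 h4 i
    exact ⟨by linarith, hpos.2 h4 i⟩

end Stmt13Aux

/-- upper bound on the size of an anisotropic central configuration with
total mass `M = Σ μ_i`: if `a > 0` then `max_i |x_i| ≤ (k−1)(M/a)^{1/3}`, and for
`k ≥ 4` also `max_i |x_i| ≤ (2^{1/3}+2^{−2/3})(k−2)^{2/3}(M/a)^{1/3}`; analogously
for `b` and the `y`-coordinates. -/
theorem stmt13 (k : ℕ) (hk : 2 ≤ k) (a b : ℝ) (μ : Fin k → ℝ) (hμ : ∀ i, 0 < μ i)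
    (p : Fin k → E2) (hinj : Function.Injective p) (hcc : AnisoCC a b μ p) :
    (0 < a →
      (∀ i, |p i 0| ≤ ((k : ℝ) - 1) * ((∑ i, μ i) / a) ^ ((1 : ℝ) / 3)) ∧
      (4 ≤ k → ∀ i, |p i 0| ≤ ((2 : ℝ) ^ ((1 : ℝ) / 3) + (2 : ℝ) ^ (-(2 : ℝ) / 3)) *
        ((k : ℝ) - 2) ^ ((2 : ℝ) / 3) * ((∑ i, μ i) / a) ^ ((1 : ℝ) / 3))) ∧
    (0 < b →
      (∀ i, |p i 1| ≤ ((k : ℝ) - 1) * ((∑ i, μ i) / b) ^ ((1 : ℝ) / 3)) ∧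
      (4 ≤ k → ∀ i, |p i 1| ≤ ((2 : ℝ) ^ ((1 : ℝ) / 3) + (2 : ℝ) ^ (-(2 : ℝ) / 3)) *
        ((k : ℝ) - 2) ^ ((2 : ℝ) / 3) * ((∑ i, μ i) / b) ^ ((1 : ℝ) / 3))) := by
  constructor
  · intro ha
    exact coord_bounds hk a ha μ hμ (fun i => p i 0) (fun i j => ‖p i - p j‖)
      (fun i j => norm_sub_rev (p j) (p i))
      (fun i j => by simpa using coord_abs_le (p i - p j) 0)
      (fun i => (hcc i).1)
  · intro hb
    exact coord_bounds hk b hb μ hμ (fun i => p i 1) (fun i j => ‖p i - p j‖)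
      (fun i j => norm_sub_rev (p j) (p i))
      (fun i j => by simpa using coord_abs_le (p i - p j) 1)
      (fun i => (hcc i).2)
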